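/- Consistency of PETS(Ax): for every nice set of axioms Ax, there is no PETS(Ax) derivation ending in the equation s₀(ε) = s₁(ε) (i.e., 0 = 1). -/
import Mathlib


namespace PETS

/-! ## Approximate values -/

/-- The set `𝔻` of approximate values: binary strings plus `*` (unknown). -/
inductive D where
  | eps  : D
  | b0   : D → D
  | b1   : D → D
  | star : D
deriving DecidableEq

instance : Zero D := ⟨D.star⟩

/-- The approximation relation `⊑` on `𝔻`. -/
inductive Approx : D → D → Prop where
  | star (v : D) : Approx .star v
  | eps : Approx .eps .eps
  | b0 {v w : D} : Approx v w → Approx (.b0 v) (.b0 w)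
  | b1 {v w : D} : Approx v w → Approx (.b1 v) (.b1 w)

/-- Componentwise extension of `⊑` to tuples. -/
def TApprox {n : ℕ} (u v : Fin n → D) : Prop := ∀ i, Approx (u i) (v i)

/-- Compatibility `u △ v`. -/
def Compat (u v : D) : Prop := Approx u v ∨ Approx v u

/-- Componentwise compatibility of tuples. -/
def TCompat {n : ℕ} (u v : Fin n → D) : Prop := ∀ i, Compat (u i) (v i)

/-- The gauge `G(v)` of an approximate value. -/
def D.gauge : D → ℕ
  | .eps => 1
  | .star => 1
  | .b0 v => v.gauge + 1
  | .b1 v => v.gauge + 1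

/-- The gauge of a tuple of approximate values. -/
def tupGauge {n : ℕ} (v : Fin n → D) : ℕ := Finset.univ.sup fun i => (v i).gauge

open Classical in
/-- `maxapprx S`: the `⊑`-greatest element of `S` if it exists, else `*`.
In particular `maxapprx ∅ = *`. -/
noncomputable def maxapprx (S : Set D) : D :=
  if h : ∃ m, m ∈ S ∧ ∀ v ∈ S, Approx v m then h.choose else D.star

/-! ## Generators and consistent sets -/

/-- A finite set of (potential) generators for `𝔻^n → 𝔻`. -/
abbrev Gens (n : ℕ) := Finset ((Fin n → D) × D)

/-- `f` is a consistent set of generators for `𝔻^n → 𝔻`: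
all values are `≠ *` and compatible arguments have compatible values. -/
def ConsistentGens {n : ℕ} (f : Gens n) : Prop :=
  (∀ p ∈ f, p.2 ≠ D.star) ∧
  ∀ p ∈ f, ∀ q ∈ f, TCompat p.1 q.1 → Compat p.2 q.2

/-- `f[x] = { v | ∃ w ⊑ x, (w ↦ v) ∈ f }`. -/
def gensAt {n : ℕ} (f : Gens n) (x : Fin n → D) : Set D :=
  {v | ∃ w : Fin n → D, TApprox w x ∧ (w, v) ∈ f}

/-- The finitely generated map `f(x) = maxapprx f[x]`. -/
noncomputable def applyGens {n : ℕ} (f : Gens n) (x : Fin n → D) : D :=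
  maxapprx (gensAt f x)

/-! ## Terms -/

/-- Terms over the language: variables, the basic symbols `ε`, `s₀`, `s₁`, and
countably many non-basic function symbols `op k` of each arity `a`
(a non-basic symbol is identified by the pair `(k, a)`). -/
inductive Tm where
  | var : ℕ → Tm
  | eps : Tm
  | s0 : Tm → Tm
  | s1 : Tm → Tm
  | app : (k : ℕ) → (a : ℕ) → (Fin a → Tm) → Tm

/-- The length (number of symbols) of a term. -/
def Tm.lh : Tm → ℕ
  | .var _ => 1
  | .eps => 1
  | .s0 t => t.lh + 1
  | .s1 t => t.lh + 1
  | .app _ a args => (Finset.univ.sum fun i : Fin a => (args i).lh) + 1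

/-- The set of variables occurring in a term. -/
def Tm.vars : Tm → Finset ℕ
  | .var x => {x}
  | .eps => ∅
  | .s0 t => t.vars
  | .s1 t => t.vars
  | .app _ a args => Finset.univ.biUnion fun i : Fin a => (args i).vars

/-- Substitution `t[u/x]` of the term `u` for the variable `x` in `t`. -/
def Tm.subst (t : Tm) (x : ℕ) (u : Tm) : Tm :=
  match t with
  | .var y => if y = x then u else .var y
  | .eps => .eps
  | .s0 s => .s0 (s.subst x u)
  | .s1 s => .s1 (s.subst x u)
  | .app k a args => .app k a fun i => (args i).subst x u

/-- Simultaneous substitution of terms for all variables. -/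
def Tm.msubst (σ : ℕ → Tm) : Tm → Tm
  | .var x => σ x
  | .eps => .eps
  | .s0 t => .s0 (t.msubst σ)
  | .s1 t => .s1 (t.msubst σ)
  | .app k a args => .app k a fun i => (args i).msubst σ

/-! ## Frames and assignments -/

/-- An entry of a frame: a non-basic symbol `(k, a)` together with a
generator `(arg, out)` for `𝔻^a → 𝔻`. -/
abbrev Entry := Σ _k : ℕ, Σ a : ℕ, (Fin a → D) × D

/-- A frame: a finite set of entries, i.e. a finite partial map from
non-basic function symbols to finite sets of generators. -/
abbrev Frame := Finset Entry

/-- `F(f)[x]` for the symbol `f = (k, a)`: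
the set `{ v | ∃ w ⊑ x, (w ↦ v) ∈ F(f) }`. -/
def Frame.setAt (F : Frame) (k a : ℕ) (x : Fin a → D) : Set D :=
  {v | ∃ w : Fin a → D, TApprox w x ∧ (⟨k, a, (w, v)⟩ : Entry) ∈ F}

/-- The evaluation `F(f)(x)` of the finitely generated map of the non-basic
symbol `f = (k, a)` in the frame `F`. -/
noncomputable def Frame.app (F : Frame) (k a : ℕ) (x : Fin a → D) : D :=
  maxapprx (F.setAt k a x)

/-- The gauge of a frame entry. -/
def Entry.gauge (e : Entry) : ℕ := max (tupGauge e.2.2.1) e.2.2.2.gauge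

/-- The gauge `G(F)` of a frame. -/
def Frame.gauge (F : Frame) : ℕ := F.sup Entry.gauge

/-- A frame is consistent if each of its sections is a consistent set of
generators (values `≠ *`, compatible arguments have compatible values). -/
def Frame.Consistent (F : Frame) : Prop :=
  (∀ (k a : ℕ) (w : Fin a → D) (v : D), (⟨k, a, (w, v)⟩ : Entry) ∈ F → v ≠ D.star) ∧
  (∀ (k a : ℕ) (w w' : Fin a → D) (v v' : D),
    (⟨k, a, (w, v)⟩ : Entry) ∈ F → (⟨k, a, (w', v')⟩ : Entry) ∈ F →
    TCompat w w' → Compat v v')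

/-- An assignment: a finitely supported map from variables to `𝔻`
(where the zero of `𝔻` is `*`, i.e. `ρ(x) = *` outside the domain). -/
abbrev Assignment := ℕ →₀ D

/-- The gauge `G(ρ)` of an assignment. -/
noncomputable def Assignment.gauge (ρ : Assignment) : ℕ :=
  ρ.support.sup fun x => (ρ x).gauge

/-- The evaluation `⟦t⟧_{F,ρ}` of a term under a frame and an assignment:
basic symbols are evaluated as themselves, non-basic symbols via their
finitely generated maps. -/
noncomputable def eval (F : Frame) (ρ : Assignment) : Tm → D
  | .var x => ρ x
  | .eps => D.eps
  | .s0 t => D.b0 (eval F ρ t)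
  | .s1 t => D.b1 (eval F ρ t)
  | .app k a args => F.app k a fun i => eval F ρ (args i)

/-! ## Nice axiom systems -/

/-- A generalized variable: a variable, `ε`, `s₀(x)` or `s₁(x)`. -/
inductive GVar where
  | var : ℕ → GVar
  | eps : GVar
  | s0 : ℕ → GVar
  | s1 : ℕ → GVar
deriving DecidableEq

/-- The term denoted by a generalized variable. -/
def GVar.toTm : GVar → Tm
  | .var x => .var x
  | .eps => .eps
  | .s0 x => .s0 (.var x)
  | .s1 x => .s1 (.var x)

/-- The variables of a generalized variable. -/
def GVar.vars : GVar → Finset ℕ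
  | .var x => {x}
  | .eps => ∅
  | .s0 x => {x}
  | .s1 x => {x}

/-- Applying an assignment to a generalized variable,
e.g. `ρ(sᵢ(x)) = sᵢ(ρ(x))`. -/
def GVar.evalA (ρ : Assignment) : GVar → D
  | .var x => ρ x
  | .eps => D.eps
  | .s0 x => D.b0 (ρ x)
  | .s1 x => D.b1 (ρ x)

/-- Unifiability of two generalized variables (they have a common
substitution instance). -/
def GVar.unif : GVar → GVar → Prop
  | .var _, _ => True
  | _, .var _ => True
  | .eps, .eps => True
  | .s0 _, .s0 _ => True
  | .s1 _, .s1 _ => True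
  | _, _ => False

/-- An axiom: an equation `f(t₁,…,tₐ) = rhs` where `f` is the non-basic
symbol `(k, a)` and each `tᵢ` is a generalized variable. -/
structure Axm where
  k : ℕ
  a : ℕ
  args : Fin a → GVar
  rhs : Tm

/-- The left-hand side term `f(t₁,…,tₐ)` of an axiom. -/
def Axm.lhs (A : Axm) : Tm := .app A.k A.a fun i => (A.args i).toTm

/-- The variables of the left-hand side of an axiom. -/
def Axm.lhsVars (A : Axm) : Finset ℕ := Finset.univ.biUnion fun i => (A.args i).vars

/-- All variables of an axiom. -/
def Axm.vars (A : Axm) : Finset ℕ := A.lhsVars ∪ A.rhs.vars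

/-- A nice set of axioms: each axiom has the form `f(x⃗) = t`, `f(ε,x⃗) = t`,
`f(x0,x⃗) = t` or `f(x1,x⃗) = t` (so all arguments beyond the first are plain
variables), the variables on the left are pairwise distinct, the right-hand
side variables occur on the left, and no left-hand side occurs twice among
the axioms, also modulo substitution. -/
structure NiceAxioms (Ax : Set Axm) : Prop where
  shape : ∀ A ∈ Ax, ∀ i : Fin A.a, 0 < (i : ℕ) → ∃ x, A.args i = GVar.var x
  distinct : ∀ A ∈ Ax, ∀ i j : Fin A.a, i ≠ j → Disjoint ((A.args i).vars) ((A.args j).vars)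
  rhsVars : ∀ A ∈ Ax, A.rhs.vars ⊆ A.lhsVars
  unique : ∀ A ∈ Ax, ∀ B ∈ Ax, A.k = B.k → ∀ h : A.a = B.a,
    (∀ i : Fin A.a, GVar.unif (A.args i) (B.args (Fin.cast h i))) → A = B

/-! ## Derivations in PETS(Ax) -/

/-- Derivations of the pure equational theory with substitution `PETS(Ax)`:
`Deriv Ax t u` is the type of derivations ending in the equation `t = u`. -/
inductive Deriv (Ax : Set Axm) : Tm → Tm → Type where
  | ax (A : Axm) (hA : A ∈ Ax) (σ : ℕ → Tm) :
      Deriv Ax (A.lhs.msubst σ) (A.rhs.msubst σ)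
  | refl (t : Tm) : Deriv Ax t t
  | symm {t u : Tm} (d : Deriv Ax u t) : Deriv Ax t u
  | trans {t s u : Tm} (d₁ : Deriv Ax t s) (d₂ : Deriv Ax s u) : Deriv Ax t u
  | compat {t u : Tm} (s : Tm) (x : ℕ) (d : Deriv Ax t u) :
      Deriv Ax (s.subst x t) (s.subst x u)
  | subst {t u : Tm} (s : Tm) (x : ℕ) (d : Deriv Ax t u) :
      Deriv Ax (t.subst x s) (u.subst x s)

namespace Deriv

variable {Ax : Set Axm}

/-- The length `lh(𝒟)` of a derivation: the sum of the lengths of the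
equations occurring in it plus the length of the additional syntax
identifying rule applications. -/
def lh : {a b : Tm} → Deriv Ax a b → ℕ
  | _, _, .ax A _ σ => (A.lhs.msubst σ).lh + (A.rhs.msubst σ).lh + 1
  | _, _, .refl t => t.lh + t.lh + 1
  | a, b, .symm d => d.lh + (a.lh + b.lh + 1)
  | a, b, .trans d₁ d₂ => d₁.lh + d₂.lh + (a.lh + b.lh + 1)
  | _, _, @Deriv.compat _ t u s x d =>
      d.lh + ((s.subst x t).lh + (s.subst x u).lh + 1) + (s.lh + 1 + 1)
  | _, _, @Deriv.subst _ t u s x d =>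
      d.lh + ((t.subst x s).lh + (u.subst x s).lh + 1)
        + (t.lh + s.lh + 1 + u.lh + s.lh + 1 + 2)

/-- The set of variables occurring in a derivation. -/
def varsOf : {a b : Tm} → Deriv Ax a b → Finset ℕ
  | _, _, .ax A _ σ => (A.lhs.msubst σ).vars ∪ (A.rhs.msubst σ).vars
  | _, _, .refl t => t.vars
  | _, _, .symm d => d.varsOf
  | _, _, .trans d₁ d₂ => d₁.varsOf ∪ d₂.varsOf
  | _, _, @Deriv.compat _ _ _ s x d => d.varsOf ∪ s.vars ∪ {x}
  | _, _, @Deriv.subst _ _ _ s x d => d.varsOf ∪ s.vars ∪ {x}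

/-- The list (with multiplicities) of variables of a derivation bound by
applications of the Substitution rule. -/
def bvars : {a b : Tm} → Deriv Ax a b → List ℕ
  | _, _, .ax _ _ _ => []
  | _, _, .refl _ => []
  | _, _, .symm d => d.bvars
  | _, _, .trans d₁ d₂ => d₁.bvars ++ d₂.bvars
  | _, _, .compat _ _ d => d.bvars
  | _, _, @Deriv.subst _ _ _ _ x d => x :: d.bvars

/-- The set of axioms of `Ax` occurring (i.e. used by an Axiom rule) in a
derivation. -/
def axiomsUsed : {a b : Tm} → Deriv Ax a b → Set Axm
  | _, _, .ax A _ _ => {A}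
  | _, _, .refl _ => ∅
  | _, _, .symm d => d.axiomsUsed
  | _, _, .trans d₁ d₂ => d₁.axiomsUsed ∪ d₂.axiomsUsed
  | _, _, .compat _ _ d => d.axiomsUsed
  | _, _, .subst _ _ d => d.axiomsUsed

/-- A substitution is an injective renaming of the variables of an axiom. -/
def InjRenaming (A : Axm) (σ : ℕ → Tm) : Prop :=
  (∀ x ∈ A.vars, ∃ y, σ x = Tm.var y) ∧ Set.InjOn σ ↑A.vars

/-- Condition (1) of Variable Normal Form: every application of the Axiom
rule is an injective renaming of an axiom. -/
def VNFax : {a b : Tm} → Deriv Ax a b → Prop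
  | _, _, .ax A _ σ => InjRenaming A σ
  | _, _, .refl _ => True
  | _, _, .symm d => d.VNFax
  | _, _, .trans d₁ d₂ => d₁.VNFax ∧ d₂.VNFax
  | _, _, .compat _ _ d => d.VNFax
  | _, _, .subst _ _ d => d.VNFax

/-- Variable Normal Form: every Axiom rule application is an injective
renaming of an axiom in `Ax`, and every variable occurring in the derivation
either occurs in the final equation or is bound by exactly one application
of the Substitution rule. -/
def VNF {a b : Tm} (d : Deriv Ax a b) : Prop :=
  d.VNFax ∧ ∀ x ∈ d.varsOf, x ∈ a.vars ∪ b.vars ∨ d.bvars.count x = 1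

end Deriv

/-! ## Models, updates, update sequences -/

/-- `F` is a model of `Ax`: for every axiom `t = u` in `Ax` and every
assignment `ρ`, `⟦t⟧_{F,ρ} ⊑ ⟦u⟧_{F,ρ}`. -/
def IsModel (F : Frame) (Ax : Set Axm) : Prop :=
  ∀ A ∈ Ax, ∀ ρ : Assignment, Approx (eval F ρ A.lhs) (eval F ρ A.rhs)

/-- `F` is a `κ`-model of the derivation `d`: `F` is a frame (its sections
are consistent sets) with `G(F) ≤ κ`, and for every axiom `t = u` of `Ax`
occurring in `d` and every assignment `ρ` with `dom(ρ) ⊆ var(d)` and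
`G(ρ) ≤ κ`, we have `⟦t⟧_{F,ρ} ⊑ ⟦u⟧_{F,ρ}`. -/
def IsKModel {Ax : Set Axm} {a b : Tm} (F : Frame) (κ : ℕ) (d : Deriv Ax a b) : Prop :=
  F.Consistent ∧ F.gauge ≤ κ ∧
  ∀ A ∈ d.axiomsUsed, ∀ ρ : Assignment,
    ↑ρ.support ⊆ (↑d.varsOf : Set ℕ) → ρ.gauge ≤ κ →
    Approx (eval F ρ A.lhs) (eval F ρ A.rhs)

/-- An update `f : v⃗ ↦ w` for the non-basic symbol `f = (k, a)`. -/
structure Upd where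
  k : ℕ
  a : ℕ
  v : Fin a → D
  w : D

/-- The gauge `G(v⃗, w)` of an update. -/
def Upd.gauge (u : Upd) : ℕ := max (tupGauge u.v) u.w.gauge

/-- The frame entry corresponding to an update. -/
def Upd.entry (u : Upd) : Entry := ⟨u.k, u.a, (u.v, u.w)⟩

/-- `F * (f : v⃗ ↦ w)`: the frame `F` updated by the update. -/
noncomputable def Frame.apUpd (F : Frame) (u : Upd) : Frame := insert u.entry F

/-- `F * σ` for a sequence of updates `σ`. -/
noncomputable def Frame.apSeq (F : Frame) (σ : List Upd) : Frame :=
  σ.foldl Frame.apUpd F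

/-- `u` is an update based on `F`, `κ` and `d`: a generator `v⃗ ↦ w` with
`G(v⃗, w) ≤ κ` for a non-basic symbol `f`, obtained from an axiom
`f(t⃗) = u'` of `Ax` occurring in `d` and an assignment `ρ` by
`vᵢ = ρ(tᵢ)` and `w = ⟦u'⟧_{F,ρ}`. -/
def IsUpdate {Ax : Set Axm} {a b : Tm} (F : Frame) (κ : ℕ) (d : Deriv Ax a b)
    (u : Upd) : Prop :=
  u.w ≠ D.star ∧ u.gauge ≤ κ ∧
  ∃ A ∈ d.axiomsUsed, ∃ ρ : Assignment,
    u = ⟨A.k, A.a, fun i => (A.args i).evalA ρ, eval F ρ A.rhs⟩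

/-- `σ` is a sequence of updates based on `F`, `κ` and `d`: each update in
the sequence is an update based on the frame produced so far. -/
def IsUpdSeq {Ax : Set Axm} {a b : Tm} (κ : ℕ) (d : Deriv Ax a b) :
    Frame → List Upd → Prop
  | _, [] => True
  | F, u :: σ => IsUpdate F κ d u ∧ IsUpdSeq κ d (F.apUpd u) σ

/-- The gauge `G(σ)` of a sequence of updates. -/
def seqGauge (σ : List Upd) : ℕ := (σ.map Upd.gauge).foldr max 0

/-- The extent `E(σ)` of a sequence of updates (maximal arity used). -/
def seqExt (σ : List Upd) : ℕ := (σ.map Upd.a).foldr max 0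

/-! ## Instructions -/

/-- Instructions: `A[t→u]`, `A[t←u]` for axiom (instances) `t = u`, and
`S↑[t,s/x]`, `S↓[t,s/x]` for terms `t, s` and a variable `x`. -/
inductive Instr where
  | axF : Tm → Tm → Instr
  | axB : Tm → Tm → Instr
  | sUp : Tm → Tm → ℕ → Instr
  | sDown : Tm → Tm → ℕ → Instr

/-- The length of an instruction. -/
def Instr.lh : Instr → ℕ
  | .axF t u => t.lh + u.lh + 1
  | .axB t u => t.lh + u.lh + 1
  | .sUp t s _ => t.lh + s.lh + 1
  | .sDown t s _ => t.lh + s.lh + 1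

/-- The length of a sequence of instructions. -/
def instrsLh (τ : List Instr) : ℕ := (τ.map Instr.lh).sum

/-- An instruction is *for* the derivation `d` if its axiom instructions
carry (injective renamings of) axioms occurring in `d`. -/
def Instr.For {Ax : Set Axm} {a b : Tm} (d : Deriv Ax a b) : Instr → Prop
  | .axF t u => ∃ A ∈ d.axiomsUsed, ∃ σ : ℕ → Tm,
      Deriv.InjRenaming A σ ∧ t = A.lhs.msubst σ ∧ u = A.rhs.msubst σ
  | .axB t u => ∃ A ∈ d.axiomsUsed, ∃ σ : ℕ → Tm,
      Deriv.InjRenaming A σ ∧ t = A.lhs.msubst σ ∧ u = A.rhs.msubst σ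
  | .sUp _ _ _ => True
  | .sDown _ _ _ => True

/-- The instruction sequences `→Inst_𝒟` (first component) and `←Inst_𝒟`
(second component) extracted from a derivation. -/
def Deriv.insts {Ax : Set Axm} : {a b : Tm} → Deriv Ax a b → List Instr × List Instr
  | _, _, .ax A _ σ =>
      ([.axF (A.lhs.msubst σ) (A.rhs.msubst σ)],
       [.axB (A.lhs.msubst σ) (A.rhs.msubst σ)])
  | _, _, .refl _ => ([], [])
  | _, _, .symm d => (d.insts.2, d.insts.1)
  | _, _, .trans d₁ d₂ => (d₁.insts.1 ++ d₂.insts.1, d₂.insts.2 ++ d₁.insts.2)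
  | _, _, .compat _ _ d => d.insts
  | _, _, @Deriv.subst _ t u s x d =>
      (Instr.sUp t s x :: (d.insts.1 ++ [Instr.sDown u s x]),
       Instr.sUp u s x :: (d.insts.2 ++ [Instr.sDown t s x]))

/-- `Ψ(t ← u, ⟨F, ρ⟩)`: for `t` of the form `f(t⃗)`, the update `f : v⃗ ↦ w`
with `vᵢ = ρ(tᵢ)` and `w = ⟦u⟧_{F,ρ}`. -/
noncomputable def Psi (t u : Tm) (F : Frame) (ρ : Assignment) : Upd :=
  match t with
  | .app k a args => ⟨k, a, fun i => eval F ρ (args i), eval F ρ u⟩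
  | _ => ⟨0, 0, Fin.elim0, eval F ρ u⟩

/-- One step of the state transformer `Φ` (the frame `F` is the fixed base
frame; the state consists of the update sequence so far and the current
assignment). -/
noncomputable def PhiStep (F : Frame) (st : List Upd × Assignment) :
    Instr → List Upd × Assignment
  | .axF _ _ => st
  | .axB t u => (st.1 ++ [Psi t u (F.apSeq st.1) st.2], st.2)
  | .sUp _ s x => (st.1, Finsupp.update st.2 x (eval (F.apSeq st.1) st.2 s))
  | .sDown _ _ x => (st.1, st.2.erase x)

/-- The state transformer `Φ(τ, ⟨F, σ, ρ⟩) = ⟨F, σ', ρ'⟩`, processing the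
instruction sequence `τ` from left to right. -/
noncomputable def Phi (F : Frame) (τ : List Instr) (st : List Upd × Assignment) :
    List Upd × Assignment :=
  τ.foldl (PhiStep F) st

/-! ## Sub-derivations -/

/-- `SubDeriv e d`: `e` is a sub-derivation of `d`. -/
inductive SubDeriv {Ax : Set Axm} :
    {a b c d : Tm} → Deriv Ax a b → Deriv Ax c d → Prop where
  | refl {a b : Tm} (d : Deriv Ax a b) : SubDeriv d d
  | symm {a b t u : Tm} {e : Deriv Ax a b} {d : Deriv Ax u t} :
      SubDeriv e d → SubDeriv e (Deriv.symm d)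
  | transL {a b t s u : Tm} {e : Deriv Ax a b} {d₁ : Deriv Ax t s} {d₂ : Deriv Ax s u} :
      SubDeriv e d₁ → SubDeriv e (Deriv.trans d₁ d₂)
  | transR {a b t s u : Tm} {e : Deriv Ax a b} {d₁ : Deriv Ax t s} {d₂ : Deriv Ax s u} :
      SubDeriv e d₂ → SubDeriv e (Deriv.trans d₁ d₂)
  | compat {a b t u : Tm} (s : Tm) (x : ℕ) {e : Deriv Ax a b} {d : Deriv Ax t u} :
      SubDeriv e d → SubDeriv e (Deriv.compat s x d)
  | subst {a b t u : Tm} (s : Tm) (x : ℕ) {e : Deriv Ax a b} {d : Deriv Ax t u} :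
      SubDeriv e d → SubDeriv e (Deriv.subst s x d)


/-! ## Consistency proof: fuel-indexed semantics -/

section Consistency

attribute [local instance] Classical.propDecidable

/-- Reflexivity of `⊑`. -/
lemma approx_refl (v : D) : Approx v v := by
  induction v with
  | eps => exact .eps
  | b0 v ih => exact .b0 ih
  | b1 v ih => exact .b1 ih
  | star => exact .star _

/-- Transitivity of `⊑`. -/
lemma approx_trans : ∀ {u v w : D}, Approx u v → Approx v w → Approx u w := by
  intro u v w h1
  induction h1 generalizing w with
  | star => intro _; exact .star _
  | eps => intro h2; exact h2
  | b0 _ ih => intro h2; cases h2 with | b0 h => exact .b0 (ih h)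
  | b1 _ ih => intro h2; cases h2 with | b1 h => exact .b1 (ih h)

/-- Order on environments. -/
def envLe (ρ ρ' : ℕ → D) : Prop := ∀ x, Approx (ρ x) (ρ' x)

lemma envLe_refl (ρ : ℕ → D) : envLe ρ ρ := fun x => approx_refl _

/-- Evaluation of a generalized variable in an environment. -/
def GVar.gev (ρ : ℕ → D) : GVar → D
  | .var x => ρ x
  | .eps => .eps
  | .s0 x => .b0 (ρ x)
  | .s1 x => .b1 (ρ x)

/-- Matching of a generalized-variable pattern against a value. -/
def gmatch : GVar → D → Prop
  | .var _, _ => True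
  | .eps, v => v = .eps
  | .s0 _, v => ∃ w, v = .b0 w
  | .s1 _, v => ∃ w, v = .b1 w

lemma gmatch_mono {p : GVar} {v w : D} (h : Approx v w) (hm : gmatch p v) :
    gmatch p w := by
  cases p with
  | var x => trivial
  | eps => cases hm; cases h; rfl
  | s0 x => obtain ⟨v', rfl⟩ := hm; cases h with | b0 h => exact ⟨_, rfl⟩
  | s1 x => obtain ⟨v', rfl⟩ := hm; cases h with | b1 h => exact ⟨_, rfl⟩

lemma gmatch_gev (p : GVar) (ρ : ℕ → D) : gmatch p (p.gev ρ) := by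
  cases p <;> simp [gmatch, GVar.gev]

lemma unif_of_gmatch {p q : GVar} {v w : D} (hp : gmatch p v) (hq : gmatch q w)
    (h : Approx v w) : GVar.unif p q := by
  cases p with
  | var x => cases q <;> trivial
  | eps =>
    cases q with
    | var y => trivial
    | eps => trivial
    | s0 y => cases hp; obtain ⟨w', rfl⟩ := hq; cases h
    | s1 y => cases hp; obtain ⟨w', rfl⟩ := hq; cases h
  | s0 x =>
    cases q with
    | var y => trivial
    | eps => obtain ⟨v', rfl⟩ := hp; cases hq; cases h
    | s0 y => trivial
    | s1 y => obtain ⟨v', rfl⟩ := hp; obtain ⟨w', rfl⟩ := hq; cases h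
  | s1 x =>
    cases q with
    | var y => trivial
    | eps => obtain ⟨v', rfl⟩ := hp; cases hq; cases h
    | s0 y => obtain ⟨v', rfl⟩ := hp; obtain ⟨w', rfl⟩ := hq; cases h
    | s1 y => trivial

/-- Extraction of the value bound by a pattern. -/
def extract : GVar → D → D
  | .var _, v => v
  | .eps, _ => .star
  | .s0 _, .b0 w => w
  | .s0 _, _ => .star
  | .s1 _, .b1 w => w
  | .s1 _, _ => .star

lemma extract_mono {p : GVar} {v w : D} (h : Approx v w) :
    Approx (extract p v) (extract p w) := by
  cases p with
  | var x => exact h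
  | eps => exact .star _
  | s0 x => cases h with
    | star => exact .star _
    | eps => exact .star _
    | b0 h' => exact h'
    | b1 h' => exact .star _
  | s1 x => cases h with
    | star => exact .star _
    | eps => exact .star _
    | b0 h' => exact .star _
    | b1 h' => exact h'

lemma extract_gev {p : GVar} (ρ : ℕ → D) {y : ℕ} (hy : y ∈ p.vars) :
    extract p (p.gev ρ) = ρ y := by
  cases p with
  | var x => simp [GVar.vars] at hy; subst hy; rfl
  | eps => simp [GVar.vars] at hy
  | s0 x => simp [GVar.vars] at hy; subst hy; rfl
  | s1 x => simp [GVar.vars] at hy; subst hy; rfl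

/-- `A` matches the argument values `vals` (for symbol `(k, a)`). -/
def Matches (A : Axm) (k a : ℕ) (vals : Fin a → D) : Prop :=
  A.k = k ∧ ∃ ha : a = A.a, ∀ i : Fin a, gmatch (A.args (Fin.cast ha i)) (vals i)

lemma fin_cast_self {n : ℕ} (h : n = n) (i : Fin n) : Fin.cast h i = i := rfl

lemma matches_mono {A : Axm} {k a : ℕ} {vals vals' : Fin a → D}
    (hv : ∀ i, Approx (vals i) (vals' i)) (h : Matches A k a vals) :
    Matches A k a vals' := by
  obtain ⟨hk, ha, hm⟩ := h
  exact ⟨hk, ha, fun i => gmatch_mono (hv i) (hm i)⟩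

lemma matches_unique {Ax : Set Axm} (hAx : NiceAxioms Ax) {A B : Axm}
    (hA : A ∈ Ax) (hB : B ∈ Ax) {k a : ℕ} {vals vals' : Fin a → D}
    (hv : ∀ i, Approx (vals i) (vals' i))
    (h1 : Matches A k a vals) (h2 : Matches B k a vals') : A = B := by
  obtain ⟨hk1, ha1, hm1⟩ := h1
  obtain ⟨hk2, ha2, hm2⟩ := h2
  have hkk : A.k = B.k := hk1.trans hk2.symm
  have haa : A.a = B.a := ha1.symm.trans ha2
  refine hAx.unique A hA B hB hkk haa (fun i => ?_)
  have hi1 := hm1 (Fin.cast ha1.symm i)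
  have hi2 := hm2 (Fin.cast ha1.symm i)
  have e1 : A.args (Fin.cast ha1 (Fin.cast ha1.symm i)) = A.args i :=
    congrArg A.args (Fin.val_injective rfl)
  have e2 : B.args (Fin.cast ha2 (Fin.cast ha1.symm i)) = B.args (Fin.cast haa i) :=
    congrArg B.args (Fin.val_injective rfl)
  rw [e1] at hi1
  rw [e2] at hi2
  exact unif_of_gmatch hi1 hi2 (hv _)

/-- The environment extracted from matching the patterns against the values. -/
noncomputable def bindEnv {a : ℕ} (pats : Fin a → GVar) (vals : Fin a → D) : ℕ → D :=
  fun y => if h : ∃ i, y ∈ (pats i).vars then extract (pats h.choose) (vals h.choose)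
    else .star

lemma bindEnv_mono {a : ℕ} (pats : Fin a → GVar) {vals vals' : Fin a → D}
    (hv : ∀ i, Approx (vals i) (vals' i)) :
    envLe (bindEnv pats vals) (bindEnv pats vals') := by
  intro y
  unfold bindEnv
  split
  · exact extract_mono (hv _)
  · exact .star _

/-- One evaluation step for an application. -/
noncomputable def appStep (Ax : Set Axm) (Erec : (ℕ → D) → Tm → D)
    (k a : ℕ) (vals : Fin a → D) : D :=
  if h : ∃ A, A ∈ Ax ∧ Matches A k a vals then
    Erec (bindEnv (fun i => h.choose.args (Fin.cast h.choose_spec.2.2.choose i)) vals)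
      h.choose.rhs
  else .star

lemma appStep_eq_of_matches {Ax : Set Axm} (hAx : NiceAxioms Ax) {A : Axm}
    (hA : A ∈ Ax) {k a : ℕ} {vals : Fin a → D} (hM : Matches A k a vals)
    (Erec : (ℕ → D) → Tm → D) :
    ∃ ha : a = A.a,
      appStep Ax Erec k a vals
        = Erec (bindEnv (fun i => A.args (Fin.cast ha i)) vals) A.rhs := by
  have hex : ∃ B, B ∈ Ax ∧ Matches B k a vals := ⟨A, hA, hM⟩
  have hCA : hex.choose = A :=
    matches_unique hAx hex.choose_spec.1 hA (fun i => approx_refl _)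
      hex.choose_spec.2 hM
  subst hCA
  refine ⟨hex.choose_spec.2.2.choose, ?_⟩
  unfold appStep
  rw [dif_pos hex]

lemma appStep_bot {Ax : Set Axm} {k a : ℕ} {vals : Fin a → D}
    (h : ¬ ∃ A, A ∈ Ax ∧ Matches A k a vals) (Erec : (ℕ → D) → Tm → D) :
    appStep Ax Erec k a vals = .star := by
  unfold appStep
  rw [dif_neg h]

lemma appStep_mono {Ax : Set Axm} (hAx : NiceAxioms Ax)
    {E1 E2 : (ℕ → D) → Tm → D}
    (hE : ∀ ρ ρ', envLe ρ ρ' → ∀ t, Approx (E1 ρ t) (E2 ρ' t))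
    {k a : ℕ} {vals vals' : Fin a → D} (hv : ∀ i, Approx (vals i) (vals' i)) :
    Approx (appStep Ax E1 k a vals) (appStep Ax E2 k a vals') := by
  by_cases h1 : ∃ A, A ∈ Ax ∧ Matches A k a vals
  · obtain ⟨A, hA, hM⟩ := h1
    have hM' : Matches A k a vals' := matches_mono hv hM
    obtain ⟨ha, he1⟩ := appStep_eq_of_matches hAx hA hM E1
    obtain ⟨ha', he2⟩ := appStep_eq_of_matches hAx hA hM' E2
    rw [he1, he2]
    have hpats : (fun i => A.args (Fin.cast ha' i)) = fun i => A.args (Fin.cast ha i) := rfl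
    rw [hpats]
    exact hE _ _ (bindEnv_mono _ hv) _
  · rw [appStep_bot h1]
    exact .star _

/-- Fuel-indexed evaluation of terms. -/
noncomputable def E (Ax : Set Axm) : ℕ → (ℕ → D) → Tm → D
  | 0 => fun _ _ => .star
  | n + 1 => fun ρ t =>
    match t with
    | .var x => ρ x
    | .eps => .eps
    | .s0 t => .b0 (E Ax n ρ t)
    | .s1 t => .b1 (E Ax n ρ t)
    | .app k a args => appStep Ax (E Ax n) k a fun i => E Ax n ρ (args i)

@[simp] lemma E_zero {Ax : Set Axm} (ρ : ℕ → D) (t : Tm) : E Ax 0 ρ t = .star := rfl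
@[simp] lemma E_var {Ax : Set Axm} (n : ℕ) (ρ : ℕ → D) (x : ℕ) :
    E Ax (n + 1) ρ (.var x) = ρ x := rfl
@[simp] lemma E_eps {Ax : Set Axm} (n : ℕ) (ρ : ℕ → D) :
    E Ax (n + 1) ρ .eps = .eps := rfl
@[simp] lemma E_s0 {Ax : Set Axm} (n : ℕ) (ρ : ℕ → D) (t : Tm) :
    E Ax (n + 1) ρ (.s0 t) = .b0 (E Ax n ρ t) := rfl
@[simp] lemma E_s1 {Ax : Set Axm} (n : ℕ) (ρ : ℕ → D) (t : Tm) :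
    E Ax (n + 1) ρ (.s1 t) = .b1 (E Ax n ρ t) := rfl
@[simp] lemma E_app {Ax : Set Axm} (n : ℕ) (ρ : ℕ → D) (k a : ℕ) (args : Fin a → Tm) :
    E Ax (n + 1) ρ (.app k a args) = appStep Ax (E Ax n) k a fun i => E Ax n ρ (args i) := rfl

/-- Monotonicity of evaluation in fuel and environment. -/
lemma E_mono {Ax : Set Axm} (hAx : NiceAxioms Ax) :
    ∀ {n n' : ℕ}, n ≤ n' → ∀ {ρ ρ' : ℕ → D}, envLe ρ ρ' →
      ∀ t, Approx (E Ax n ρ t) (E Ax n' ρ' t) := by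
  intro n
  induction n with
  | zero => intro n' _ ρ ρ' _ t; exact .star _
  | succ n ih =>
    intro n' hle ρ ρ' hρ t
    obtain ⟨m, rfl⟩ : ∃ m, n' = m + 1 := ⟨n' - 1, by omega⟩
    have hnm : n ≤ m := by omega
    cases t with
    | var x => exact hρ x
    | eps => exact .eps
    | s0 t => exact .b0 (ih hnm hρ t)
    | s1 t => exact .b1 (ih hnm hρ t)
    | app k a args =>
      exact appStep_mono hAx (fun σ σ' hσ u => ih hnm hσ u)
        (fun i => ih hnm hρ (args i))

/-- Evaluation only depends on the environment on the variables of the term. -/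
lemma E_congr {Ax : Set Axm} :
    ∀ (n : ℕ) {ρ ρ' : ℕ → D} (t : Tm), (∀ x ∈ t.vars, ρ x = ρ' x) →
      E Ax n ρ t = E Ax n ρ' t := by
  intro n
  induction n with
  | zero => intro ρ ρ' t _; rfl
  | succ n ih =>
    intro ρ ρ' t h
    cases t with
    | var x => exact h x (by simp [Tm.vars])
    | eps => rfl
    | s0 t => exact congrArg _ (ih t h)
    | s1 t => exact congrArg _ (ih t h)
    | app k a args =>
      have : (fun i => E Ax n ρ (args i)) = fun i => E Ax n ρ' (args i) := by
        funext i
        exact ih (args i) fun x hx => h x (by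
          simp only [Tm.vars, Finset.mem_biUnion]
          exact ⟨i, Finset.mem_univ _, hx⟩)
      simp only [E_app, this]

/-- Restriction of an environment to a finite set of variables. -/
noncomputable def restr (ρ : ℕ → D) (S : Finset ℕ) : ℕ → D :=
  fun y => if y ∈ S then ρ y else .star

lemma restr_le (ρ : ℕ → D) (S : Finset ℕ) : envLe (restr ρ S) ρ := by
  intro y
  unfold restr
  split
  · exact approx_refl _
  · exact .star _

lemma matches_gev {A : Axm} (ρ : ℕ → D) :
    Matches A A.k A.a (fun i => (A.args i).gev ρ) :=
  ⟨rfl, rfl, fun i => by rw [fin_cast_self]; exact gmatch_gev _ _⟩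

lemma bindEnv_gev {A : Axm} (ha : A.a = A.a) (ρ : ℕ → D) :
    bindEnv (fun i => A.args (Fin.cast ha i)) (fun i => (A.args i).gev ρ)
      = restr ρ A.lhsVars := by
  funext y
  unfold bindEnv restr
  have hps : (fun i => A.args (Fin.cast ha i)) = A.args := rfl
  rw [hps]
  have hmem : (∃ i, y ∈ (A.args i).vars) ↔ y ∈ A.lhsVars := by
    simp [Axm.lhsVars, Finset.mem_biUnion]
  split
  · next h =>
    rw [if_pos (hmem.mp h)]
    exact extract_gev ρ h.choose_spec
  · next h =>
    rw [if_neg (fun hy => h (hmem.mpr hy))]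

/-- The key axiom-step computation: with enough fuel, evaluating the
left-hand side of an axiom performs exactly one unfolding step. -/
lemma E_axiom {Ax : Set Axm} (hAx : NiceAxioms Ax) {A : Axm} (hA : A ∈ Ax)
    (n : ℕ) (ρ : ℕ → D) :
    E Ax (n + 3) ρ A.lhs = E Ax (n + 2) (restr ρ A.lhsVars) A.rhs := by
  have hvals : (fun i => E Ax (n + 2) ρ ((A.args i).toTm))
      = fun i => (A.args i).gev ρ := by
    funext i
    cases h : A.args i <;> simp [GVar.toTm, GVar.gev]
  have hlhs : A.lhs = .app A.k A.a fun i => (A.args i).toTm := rfl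
  rw [hlhs]
  show appStep Ax (E Ax (n + 2)) A.k A.a (fun i => E Ax (n + 2) ρ ((A.args i).toTm))
    = _
  rw [hvals]
  obtain ⟨ha, he⟩ := appStep_eq_of_matches hAx hA (matches_gev ρ) (E Ax (n + 2))
  rw [he, bindEnv_gev]

/-- Simultaneous-substitution lemma, one direction. -/
lemma E_msubst_le {Ax : Set Axm} (hAx : NiceAxioms Ax) (σ : ℕ → Tm) :
    ∀ (n : ℕ) (ρ : ℕ → D) (t : Tm),
      Approx (E Ax n ρ (t.msubst σ)) (E Ax n (fun x => E Ax n ρ (σ x)) t) := by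
  intro n
  induction n with
  | zero => intro ρ t; exact .star _
  | succ n ih =>
    intro ρ t
    have henv : envLe (fun x => E Ax n ρ (σ x)) fun x => E Ax (n + 1) ρ (σ x) :=
      fun x => E_mono hAx (Nat.le_succ n) (envLe_refl ρ) (σ x)
    cases t with
    | var x => exact approx_refl _
    | eps => exact .eps
    | s0 t =>
      exact .b0 (approx_trans (ih ρ t) (E_mono hAx le_rfl henv t))
    | s1 t =>
      exact .b1 (approx_trans (ih ρ t) (E_mono hAx le_rfl henv t))
    | app k a args =>
      simp only [Tm.msubst, E_app]
      exact appStep_mono hAx (fun σ1 σ2 hσ u => E_mono hAx le_rfl hσ u)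
        (fun i => approx_trans (ih ρ (args i)) (E_mono hAx le_rfl henv (args i)))

/-- Simultaneous-substitution lemma, other direction. -/
lemma E_msubst_ge {Ax : Set Axm} (hAx : NiceAxioms Ax) (σ : ℕ → Tm) (k : ℕ)
    (ρ : ℕ → D) :
    ∀ (n : ℕ) (t : Tm),
      Approx (E Ax n (fun x => E Ax k ρ (σ x)) t) (E Ax (n + k) ρ (t.msubst σ)) := by
  intro n
  induction n with
  | zero => intro t; exact .star _
  | succ n ih =>
    intro t
    have hfuel : n + 1 + k = (n + k) + 1 := by omega
    rw [hfuel]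
    cases t with
    | var x => exact E_mono hAx (by omega) (envLe_refl ρ) (σ x)
    | eps => exact .eps
    | s0 t => exact .b0 (ih t)
    | s1 t => exact .b1 (ih t)
    | app k' a args =>
      simp only [Tm.msubst, E_app]
      exact appStep_mono hAx (fun σ1 σ2 hσ u => E_mono hAx (by omega) hσ u)
        (fun i => ih (args i))

lemma subst_eq_msubst (t : Tm) (x : ℕ) (u : Tm) :
    t.subst x u = t.msubst fun y => if y = x then u else .var y := by
  induction t with
  | var y => simp [Tm.subst, Tm.msubst]
  | eps => rfl
  | s0 t ih => simp [Tm.subst, Tm.msubst, ih]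
  | s1 t ih => simp [Tm.subst, Tm.msubst, ih]
  | app k a args ih => simp [Tm.subst, Tm.msubst]; funext i; exact ih i

/-- The limit preorder on terms induced by the fuel-indexed evaluation. -/
def TmLe (Ax : Set Axm) (t u : Tm) : Prop :=
  ∀ (ρ : ℕ → D) (n : ℕ), ∃ m, Approx (E Ax n ρ t) (E Ax m ρ u)

lemma TmLe.refl {Ax : Set Axm} (t : Tm) : TmLe Ax t t :=
  fun ρ n => ⟨n, approx_refl _⟩

lemma TmLe.trans {Ax : Set Axm} {t s u : Tm} (h1 : TmLe Ax t s) (h2 : TmLe Ax s u) :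
    TmLe Ax t u := by
  intro ρ n
  obtain ⟨m, hm⟩ := h1 ρ n
  obtain ⟨m', hm'⟩ := h2 ρ m
  exact ⟨m', approx_trans hm hm'⟩

lemma TmLe.axiom_fwd {Ax : Set Axm} (hAx : NiceAxioms Ax) {A : Axm} (hA : A ∈ Ax)
    (σ : ℕ → Tm) : TmLe Ax (A.lhs.msubst σ) (A.rhs.msubst σ) := by
  intro ρ n
  refine ⟨n + 2 + n, ?_⟩
  have c1 := E_msubst_le hAx σ n ρ A.lhs
  have c2 : Approx (E Ax n (fun x => E Ax n ρ (σ x)) A.lhs)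
      (E Ax (n + 3) (fun x => E Ax n ρ (σ x)) A.lhs) :=
    E_mono hAx (by omega) (envLe_refl _) _
  have c3 := E_axiom hAx hA n (fun x => E Ax n ρ (σ x))
  have c4 : Approx (E Ax (n + 2) (restr (fun x => E Ax n ρ (σ x)) A.lhsVars) A.rhs)
      (E Ax (n + 2) (fun x => E Ax n ρ (σ x)) A.rhs) :=
    E_mono hAx le_rfl (restr_le _ _) _
  have c5 := E_msubst_ge hAx σ n ρ (n + 2) A.rhs
  exact approx_trans c1 (approx_trans c2 (c3 ▸ approx_trans c4 c5))

lemma TmLe.axiom_bwd {Ax : Set Axm} (hAx : NiceAxioms Ax) {A : Axm} (hA : A ∈ Ax)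
    (σ : ℕ → Tm) : TmLe Ax (A.rhs.msubst σ) (A.lhs.msubst σ) := by
  intro ρ n
  refine ⟨n + 3 + n, ?_⟩
  have c1 := E_msubst_le hAx σ n ρ A.rhs
  have c2 : Approx (E Ax n (fun x => E Ax n ρ (σ x)) A.rhs)
      (E Ax (n + 2) (fun x => E Ax n ρ (σ x)) A.rhs) :=
    E_mono hAx (by omega) (envLe_refl _) _
  have c3 : E Ax (n + 2) (fun x => E Ax n ρ (σ x)) A.rhs
      = E Ax (n + 2) (restr (fun x => E Ax n ρ (σ x)) A.lhsVars) A.rhs := by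
    refine E_congr _ _ fun y hy => ?_
    unfold restr
    rw [if_pos (hAx.rhsVars A hA hy)]
  have c4 := (E_axiom hAx hA n (fun x => E Ax n ρ (σ x))).symm
  have c5 := E_msubst_ge hAx σ n ρ (n + 3) A.lhs
  exact approx_trans c1 (approx_trans c2 (c3 ▸ c4 ▸ c5))

lemma TmLe.subst {Ax : Set Axm} (hAx : NiceAxioms Ax) {t u : Tm}
    (h : TmLe Ax t u) (s : Tm) (x : ℕ) : TmLe Ax (t.subst x s) (u.subst x s) := by
  intro ρ n
  set σ : ℕ → Tm := fun y => if y = x then s else .var y with hσ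
  rw [subst_eq_msubst t x s, subst_eq_msubst u x s]
  have c1 := E_msubst_le hAx σ n ρ t
  obtain ⟨m, hm⟩ := h (fun y => E Ax n ρ (σ y)) n
  have c3 := E_msubst_ge hAx σ n ρ m u
  exact ⟨m + n, approx_trans c1 (approx_trans hm c3)⟩

lemma TmLe.compat {Ax : Set Axm} (hAx : NiceAxioms Ax) {t u : Tm}
    (h : TmLe Ax t u) (s : Tm) (x : ℕ) : TmLe Ax (s.subst x t) (s.subst x u) := by
  intro ρ n
  set σt : ℕ → Tm := fun y => if y = x then t else .var y with hσt
  set σu : ℕ → Tm := fun y => if y = x then u else .var y with hσu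
  rw [subst_eq_msubst s x t, subst_eq_msubst s x u]
  have c1 := E_msubst_le hAx σt n ρ s
  obtain ⟨m, hm⟩ := h ρ n
  have henv : envLe (fun y => E Ax n ρ (σt y)) fun y => E Ax (n + m) ρ (σu y) := by
    intro y
    by_cases hy : y = x
    · simp only [hσt, hσu, if_pos hy]
      exact approx_trans hm (E_mono hAx (by omega) (envLe_refl ρ) u)
    · simp only [hσt, hσu, if_neg hy]
      exact E_mono hAx (by omega) (envLe_refl ρ) _
  have c2 := E_mono hAx (le_refl n) henv s
  have c3 := E_msubst_ge hAx σu (n + m) ρ n s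
  exact ⟨n + (n + m), approx_trans c1 (approx_trans c2 c3)⟩

/-- Soundness of derivations for the limit preorder. -/
lemma deriv_sound {Ax : Set Axm} (hAx : NiceAxioms Ax) {t u : Tm}
    (d : Deriv Ax t u) : TmLe Ax t u ∧ TmLe Ax u t := by
  induction d with
  | ax A hA σ => exact ⟨TmLe.axiom_fwd hAx hA σ, TmLe.axiom_bwd hAx hA σ⟩
  | refl t => exact ⟨TmLe.refl t, TmLe.refl t⟩
  | symm d ih => exact ⟨ih.2, ih.1⟩
  | trans d1 d2 ih1 ih2 => exact ⟨ih1.1.trans ih2.1, ih2.2.trans ih1.2⟩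
  | compat s x d ih => exact ⟨TmLe.compat hAx ih.1 s x, TmLe.compat hAx ih.2 s x⟩
  | subst s x d ih => exact ⟨TmLe.subst hAx ih.1 s x, TmLe.subst hAx ih.2 s x⟩

end Consistency

/-- Consistency of `PETS(Ax)`: for every nice set of axioms
`Ax`, there is no `PETS(Ax)` derivation ending in `s₀(ε) = s₁(ε)`
(i.e. `0 = 1`). -/
theorem consistency_PETS (Ax : Set Axm) (hAx : NiceAxioms Ax) :
    IsEmpty (Deriv Ax (Tm.s0 Tm.eps) (Tm.s1 Tm.eps)) := by
  constructor
  intro d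
  obtain ⟨m, hm⟩ := (deriv_sound hAx d).1 (fun _ => D.star) 2
  have h2 : E Ax 2 (fun _ => D.star) (Tm.s0 Tm.eps) = D.b0 D.eps := rfl
  rw [h2] at hm
  match m, hm with
  | 0, hm => rw [E_zero] at hm; cases hm
  | m + 1, hm => rw [E_s1] at hm; cases hm

end PETS
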